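/- Let x, y ∈ ℕ^n with x majorized by y, and let p, q ∈ {1,...,n} with p ≤ q. If x↓ − e_p and y↓ − e_q are both nonnegative, then x↓ − e_p is majorized by y↓ − e_q, where e_i is the i-th standard basis vector. -/

import Mathlib

open Finset

/-- Nondecreasing rearrangement of a finite vector. -/
def sortAsc {n : ℕ} {α : Type*} [LinearOrder α] (x : Fin n → α) : Fin n → α :=
  x ∘ Tuple.sort x

/-- Nonincreasing rearrangement of a finite vector. -/
def sortDesc {n : ℕ} {α : Type*} [LinearOrder α] (x : Fin n → α) : Fin n → α :=
  fun i => sortAsc x i.rev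

/-- Sum of the entries of `f` at positions `< k`. -/
def psum {n : ℕ} {α : Type*} [AddCommMonoid α] (f : Fin n → α) (k : ℕ) : α :=
  ∑ i : Fin n, if (i : ℕ) < k then f i else 0

/-- `x` is majorized by `y`: every partial sum of the `k` largest entries of `x`
is at most that of `y`, and the total sums agree. -/
def Maj {n : ℕ} {α : Type*} [AddCommMonoid α] [LinearOrder α] [IsOrderedAddMonoid α] (x y : Fin n → α) : Prop :=
  (∀ k : ℕ, psum (sortDesc x) k ≤ psum (sortDesc y) k) ∧ (∑ i, x i) = ∑ i, y i

/-- Weak submajorization: the sum of the `k` largest entries of `x` is at most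
that of `y`, for every `k`. -/
def WeakSub {n : ℕ} {α : Type*} [AddCommMonoid α] [LinearOrder α] [IsOrderedAddMonoid α] (x y : Fin n → α) : Prop :=
  ∀ k : ℕ, psum (sortDesc x) k ≤ psum (sortDesc y) k

/-- Weak supermajorization: the sum of the `k` smallest entries of `x` is at least
that of `y`, for every `k`. -/
def WeakSuper {n : ℕ} {α : Type*} [AddCommMonoid α] [LinearOrder α] [IsOrderedAddMonoid α] (x y : Fin n → α) : Prop :=
  ∀ k : ℕ, psum (sortAsc y) k ≤ psum (sortAsc x) k

/-
Write `a = x↓` and `b = y↓`. Decrementing the sorted vector `a` at `p` and re-sorting is the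
same as decrementing it at the last position `r` where `a r = a p`; likewise `y↓ - e_q` sorts
to `b - e_s`, with `s ≥ q` the last position where `b s = b q`. The partial sums of length `k`
then drop by one exactly when `r < k` (resp. `s < k`), so the only case that needs an argument
is `s < k ≤ r`, where the majorization `∑_{i<k} a i ≤ ∑_{i<k} b i` must be strict. It is: `a`
is constant on `[s, k]`, the `(k+1)`-st partial sums give `a k ≤ b k` in case of equality, and
`b ≥ b k` on `[s, k)` with `b s > b k`, so `∑_{s≤i<k} a i < ∑_{s≤i<k} b i`, contradicting the
inequality of the partial sums of length `s`.
-/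

section Sorting

variable {n : ℕ} {α : Type*} [LinearOrder α]

lemma sortDesc_eq_comp (f : Fin n → α) : sortDesc f = f ∘ (Fin.revPerm.trans (Tuple.sort f)) :=
  rfl

lemma antitone_sortDesc (f : Fin n → α) : Antitone (sortDesc f) :=
  fun _ _ hij => Tuple.monotone_sort f (Fin.rev_le_rev.mpr hij)

lemma sortDesc_eq_comp_of_antitone {f : Fin n → α} {σ : Equiv.Perm (Fin n)}
    (hσ : Antitone (f ∘ σ)) : sortDesc f = f ∘ σ := by
  rw [sortDesc_eq_comp]
  exact Tuple.unique_antitone (sortDesc_eq_comp f ▸ antitone_sortDesc f) hσ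

lemma sum_sortDesc [AddCommMonoid α] (f : Fin n → α) : ∑ i, sortDesc f i = ∑ i, f i :=
  Equiv.sum_comp (Fin.revPerm.trans (Tuple.sort f)) f

end Sorting

section Decrement

variable {n : ℕ}

lemma antitone_sub_single {f : Fin n → ℕ} (hf : Antitone f) {r : Fin n}
    (hr_last : ∀ j, r < j → f j < f r) : Antitone fun i => f i - if i = r then 1 else 0 := by
  intro i j hij
  have hfij := hf hij
  by_cases hi : i = r <;> by_cases hj : j = r
  · subst hi hj; rfl
  · subst hi
    have := hr_last j (lt_of_le_of_ne hij (Ne.symm hj))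
    simp only [hj, if_true, if_false]
    omega
  · subst hj
    simp only [hi, if_true, if_false]
    omega
  · simp only [hi, hj, if_false]
    omega

lemma exists_sortDesc_sub_single {f : Fin n → ℕ} (hf : Antitone f) (p : Fin n) :
    ∃ r, p ≤ r ∧ f r = f p ∧ (∀ j, r < j → f j < f r) ∧
      sortDesc (fun i => f i - if i = p then 1 else 0) = fun i => f i - if i = r then 1 else 0 := by
  classical
  -- swapping `p` with the last index `r` of the value `f p` sorts `f - e_p`
  set S := univ.filter fun j => f j = f p
  have hpS : p ∈ S := by simp [S]
  set r := S.max' ⟨p, hpS⟩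
  have hfr : f r = f p := (mem_filter.mp (S.max'_mem _)).2
  have hr_last : ∀ j, r < j → f j < f r := fun j hj =>
    (hf hj.le).lt_of_ne fun h => hj.not_ge (S.le_max' j (by simp [S, h, hfr]))
  have hswap : (fun i => f i - if i = p then 1 else 0) ∘ Equiv.swap p r
      = fun i => f i - if i = r then 1 else 0 := by
    funext i
    simp only [Function.comp_apply, Equiv.swap_apply_def]
    split_ifs <;> simp_all
  refine ⟨r, S.le_max' p hpS, hfr, hr_last, ?_⟩
  rw [sortDesc_eq_comp_of_antitone (hswap ▸ antitone_sub_single hf hr_last), hswap]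

end Decrement

section PartialSums

variable {n : ℕ}

lemma psum_add_sum_Ico {α : Type*} [AddCommMonoid α] (f : Fin n → α) {q k : ℕ} (hqk : q ≤ k) :
    psum f q + ∑ i ∈ univ.filter (fun i : Fin n => q ≤ (i : ℕ) ∧ (i : ℕ) < k), f i = psum f k := by
  rw [psum, psum, sum_filter, ← sum_add_distrib]
  refine sum_congr rfl fun i _ => ?_
  by_cases hiq : (i : ℕ) < q
  · simp [hiq, hiq.trans_le hqk, not_le.mpr hiq]
  · simp [hiq, not_lt.mp hiq]

lemma psum_of_le {α : Type*} [AddCommMonoid α] (f : Fin n → α) {k : ℕ} (hk : n ≤ k) :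
    psum f k = ∑ i, f i :=
  sum_congr rfl fun i _ => if_pos (i.isLt.trans_le hk)

lemma psum_succ {α : Type*} [AddCommMonoid α] (f : Fin n → α) (k : Fin n) :
    psum f (k + 1) = psum f k + f k := by
  rw [← psum_add_sum_Ico f (Nat.le_succ k)]
  congr 1
  convert sum_singleton f k using 2
  ext i
  simp only [mem_filter, mem_univ, true_and, mem_singleton, Fin.ext_iff]
  omega

lemma psum_sub_single (f : Fin n → ℕ) {j : Fin n} (hj : 1 ≤ f j) (k : ℕ) :
    psum (fun i => f i - if i = j then 1 else 0) k + (if (j : ℕ) < k then 1 else 0)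
      = psum f k := by
  rw [psum, psum, ← Fintype.sum_ite_eq' j (fun i : Fin n => if (i : ℕ) < k then 1 else 0),
    ← sum_add_distrib]
  refine sum_congr rfl fun i _ => ?_
  by_cases hij : i = j
  · subst hij; split_ifs <;> omega
  · simp [hij]

end PartialSums

section Majorization

variable {n : ℕ}

lemma psum_lt_psum_of_antitone {α : Type*} [AddCommMonoid α] [LinearOrder α]
    [IsOrderedCancelAddMonoid α] {a b : Fin n → α} (ha : Antitone a) (hb : Antitone b)
    (hab : ∀ k, psum a k ≤ psum b k) {q k : Fin n} (hqk : q < k) (haqk : a q ≤ a k)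
    (hbkq : b k < b q) : psum a k < psum b k := by
  refine (hab k).lt_of_ne fun hk => ?_
  have hak : a k ≤ b k := by
    have := hab (k + 1)
    rw [psum_succ, psum_succ, hk] at this
    exact le_of_add_le_add_left this
  have hIco : ∑ i ∈ univ.filter (fun i : Fin n => (q : ℕ) ≤ i ∧ (i : ℕ) < k), a i
      < ∑ i ∈ univ.filter (fun i : Fin n => (q : ℕ) ≤ i ∧ (i : ℕ) < k), b i := by
    refine sum_lt_sum (fun i hi => ?_) ⟨q, by simpa using hqk, haqk.trans_lt (hak.trans_lt hbkq)⟩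
    simp only [mem_filter, mem_univ, true_and] at hi
    calc a i ≤ a q := ha (Fin.le_def.mpr hi.1)
      _ ≤ a k := haqk
      _ ≤ b k := hak
      _ ≤ b i := hb (Fin.le_def.mpr hi.2.le)
  have := add_lt_add_of_le_of_lt (hab q) hIco
  rw [psum_add_sum_Ico a (Fin.le_def.mp hqk.le), psum_add_sum_Ico b (Fin.le_def.mp hqk.le)] at this
  exact this.ne hk

lemma psum_sub_single_le_psum_sub_single {a b : Fin n → ℕ} (ha : Antitone a) (hb : Antitone b)
    (hab : ∀ k, psum a k ≤ psum b k) {r s : Fin n} (hsr : a s ≤ a r)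
    (hs_last : ∀ j, s < j → b j < b s) (hr : 1 ≤ a r) (hs : 1 ≤ b s) (k : ℕ) :
    psum (fun i => a i - if i = r then 1 else 0) k
      ≤ psum (fun i => b i - if i = s then 1 else 0) k := by
  have hak := psum_sub_single a hr k
  have hbk := psum_sub_single b hs k
  have habk := hab k
  by_cases hsk : (s : ℕ) < k
  · by_cases hrk : (r : ℕ) < k
    · simp only [hrk, hsk, if_true] at hak hbk
      omega
    · have hkn : k < n := by omega
      have hlt := psum_lt_psum_of_antitone ha hb hab (k := ⟨k, hkn⟩) hsk
        (hsr.trans (ha (Fin.le_def.mpr (not_lt.mp hrk)))) (hs_last _ hsk)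
      simp only [hrk, hsk, if_true, if_false] at hak hbk hlt
      omega
  · simp only [hsk, if_false] at hbk
    omega

end Majorization

theorem stmt_6 {n : ℕ} (x y : Fin n → ℕ) (h : Maj x y) (p q : Fin n) (hpq : p ≤ q)
    (hx : 1 ≤ sortDesc x p) (hy : 1 ≤ sortDesc y q) :
    Maj (fun i => sortDesc x i - if i = p then 1 else 0)
        (fun i => sortDesc y i - if i = q then 1 else 0) := by
  obtain ⟨hmaj, hsum⟩ := h
  obtain ⟨r, -, har, -, hxr⟩ := exists_sortDesc_sub_single (antitone_sortDesc x) p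
  obtain ⟨s, hqs, hbs, hs_last, hys⟩ := exists_sortDesc_sub_single (antitone_sortDesc y) q
  refine ⟨fun k => ?_, ?_⟩
  · rw [hxr, hys]
    exact psum_sub_single_le_psum_sub_single (antitone_sortDesc x) (antitone_sortDesc y) hmaj
      (har ▸ antitone_sortDesc x (hpq.trans hqs)) hs_last (har ▸ hx) (hbs ▸ hy) k
  · have hxn := psum_sub_single (sortDesc x) hx n
    have hyn := psum_sub_single (sortDesc y) hy n
    simp only [psum_of_le _ le_rfl, p.isLt, q.isLt, if_true, sum_sortDesc] at hxn hyn
    beta_reduce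
    omega
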